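/- For all real numbers ψ and ψ₀, log(1 + exp ψ) ≤ log(1 + exp ψ₀) + (exp ψ₀/(1 + exp ψ₀))·(ψ − ψ₀) + (1/8)·(ψ − ψ₀)², with equality when ψ = ψ₀. -/

import Mathlib

/-! The derivative of `t ↦ log (1 + exp t)` is the sigmoid `σ`, and `σ' = σ (1 - σ) ≤ 1/4`.
Hence `t ↦ t / 4 - σ t` is monotone, so the gap between the quadratic bound and
`log (1 + exp t)` has a derivative that changes sign from `-` to `+` at `ψ₀`, where the gap
vanishes: `ψ₀` is a global minimum of the gap. -/

open Real Set

theorem le_add_deriv_mul_add_sq_of_monotone {f f' : ℝ → ℝ} {M : ℝ}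
    (hf : ∀ t, HasDerivAt f (f' t) t) (hM : Monotone fun t => M * t - f' t) (x y : ℝ) :
    f y ≤ f x + f' x * (y - x) + M / 2 * (y - x) ^ 2 := by
  set gap : ℝ → ℝ := fun t => f x + f' x * (t - x) + M / 2 * (t - x) ^ 2 - f t
  have hgap (t : ℝ) : HasDerivAt gap ((M * t - f' t) - (M * x - f' x)) t := by
    have hlin := (hasDerivAt_id' t).sub_const x
    have hq := ((hlin.const_mul (f' x)).const_add (f x)).add ((hlin.pow 2).const_mul (M / 2))
    exact (hq.sub (hf t)).congr_deriv (by push_cast; ring)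
  have hdiff : Differentiable ℝ gap := fun t => (hgap t).differentiableAt
  have hmin : IsMinOn gap univ x :=
    isMinOn_univ_of_deriv hdiff.continuous.continuousAt hdiff.differentiableOn
      hdiff.differentiableOn
      (fun t ht => by rw [(hgap t).deriv]; exact sub_nonpos.2 (hM (le_of_lt ht)))
      (fun t ht => by rw [(hgap t).deriv]; exact sub_nonneg.2 (hM (le_of_lt ht)))
  have hxy : gap x ≤ gap y := hmin (mem_univ y)
  simp only [gap, sub_self, mul_zero, add_zero, ne_eq, OfNat.ofNat_ne_zero, not_false_eq_true,
    zero_pow] at hxy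
  linarith

namespace Real

theorem sigmoid_mul_one_sub_sigmoid_le (x : ℝ) : sigmoid x * (1 - sigmoid x) ≤ 1 / 4 := by
  nlinarith [sq_nonneg (2 * sigmoid x - 1)]

theorem monotone_mul_sub_sigmoid : Monotone fun x => 1 / 4 * x - sigmoid x :=
  monotone_of_hasDerivAt_nonneg
    (fun x => ((hasDerivAt_id x).const_mul (1 / 4)).sub (hasDerivAt_sigmoid x))
    (fun x => by simpa using sigmoid_mul_one_sub_sigmoid_le x)

theorem exp_div_one_add_exp (x : ℝ) : exp x / (1 + exp x) = sigmoid x := by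
  rw [sigmoid_def, exp_neg]
  field_simp
  ring

theorem hasDerivAt_log_one_add_exp (x : ℝ) :
    HasDerivAt (fun t => log (1 + exp t)) (sigmoid x) x := by
  rw [← exp_div_one_add_exp]
  simpa using ((hasDerivAt_exp x).const_add 1).log (by positivity)

end Real

theorem bohning_quadratic_bound (ψ ψ₀ : ℝ) :
    Real.log (1 + Real.exp ψ) ≤
        Real.log (1 + Real.exp ψ₀) +
          (Real.exp ψ₀ / (1 + Real.exp ψ₀)) * (ψ - ψ₀) + (1 / 8) * (ψ - ψ₀) ^ 2 ∧
      (ψ = ψ₀ →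
        Real.log (1 + Real.exp ψ) =
          Real.log (1 + Real.exp ψ₀) +
            (Real.exp ψ₀ / (1 + Real.exp ψ₀)) * (ψ - ψ₀) + (1 / 8) * (ψ - ψ₀) ^ 2) := by
  refine ⟨?_, fun h => by subst h; simp⟩
  have h := le_add_deriv_mul_add_sq_of_monotone hasDerivAt_log_one_add_exp
    monotone_mul_sub_sigmoid ψ₀ ψ
  rw [exp_div_one_add_exp]
  convert h using 2
  norm_num
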